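/- There is no connected chordal graph G with γ_t(G) = 4 and γ_gr^t(G) = 4. -/

import Mathlib

/-- `S` is a total dominating set of `G`: every vertex has a neighbor in `S`. -/
def IsTotalDomSet {V : Type*} (G : SimpleGraph V) (S : Set V) : Prop :=
  ∀ v : V, ∃ u ∈ S, G.Adj v u

/-- `l` is a legal sequence of `G`: the vertices are distinct and every vertex
(except possibly the first) totally dominates a vertex not totally dominated
by the previous vertices. -/
def IsLegalSeq {V : Type*} (G : SimpleGraph V) (l : List V) : Prop :=
  l.Nodup ∧ ∀ i : Fin l.length, 0 < (i : ℕ) →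
    ∃ w : V, G.Adj (l.get i) w ∧ ∀ j : Fin l.length, (j : ℕ) < (i : ℕ) → ¬ G.Adj (l.get j) w

/-- `l` is a total dominating sequence of `G`. -/
def IsTotalDomSeq {V : Type*} (G : SimpleGraph V) (l : List V) : Prop :=
  IsLegalSeq G l ∧ IsTotalDomSet G {v | v ∈ l}

/-- The Grundy total domination number of `G`: the maximum length of a total
dominating sequence. -/
noncomputable def grundyTotalDomNum {V : Type*} (G : SimpleGraph V) : ℕ :=
  sSup {k : ℕ | ∃ l : List V, IsTotalDomSeq G l ∧ l.length = k}

/-- The total domination number of `G`: the minimum cardinality of a total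
dominating set. -/
noncomputable def totalDomNum {V : Type*} (G : SimpleGraph V) : ℕ :=
  sInf {k : ℕ | ∃ S : Set V, IsTotalDomSet G S ∧ S.ncard = k}

/-- `A`, `B` is a bipartition of `G`. -/
def IsBipartitionOf {V : Type*} (G : SimpleGraph V) (A B : Set V) : Prop :=
  (∀ v : V, (v ∈ A ∧ v ∉ B) ∨ (v ∈ B ∧ v ∉ A)) ∧
  ∀ ⦃u v : V⦄, G.Adj u v → (u ∈ A ∧ v ∈ B) ∨ (u ∈ B ∧ v ∈ A)

/-- `G` has no false twins: distinct vertices have distinct open neighborhoods. -/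
def FalseTwinFree {V : Type*} (G : SimpleGraph V) : Prop :=
  ∀ u v : V, u ≠ v → G.neighborSet u ≠ G.neighborSet v

/-- `G` has no isolated vertices. -/
def NoIsolatedVerts {V : Type*} (G : SimpleGraph V) : Prop :=
  ∀ v : V, ∃ u : V, G.Adj v u

/-- A graph is chordal if it contains no induced cycle of length greater than 3. -/
def Chordal {V : Type*} (G : SimpleGraph V) : Prop :=
  ∀ n : ℕ, 4 ≤ n → IsEmpty (SimpleGraph.cycleGraph n ↪g G)

/-!
In a counterexample `G`, no three vertices totally dominate `G` (as `γ_t(G) = 4`), and every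
legal sequence of length four totally dominates `G` (as `γ_gr^t(G) = 4` and a legal sequence
missing a vertex `u` can be prolonged by a neighbour of `u`, then completed to a total dominating
sequence). Hence every vertex `vᵢ` of a total dominating set `v₀, …, v₃` has a private neighbour
`tᵢ`, and `t₀, …, t₃` is legal (`tᵢ` newly dominates `vᵢ`), so it is again totally dominating
with the `vᵢ` as private neighbours. A case analysis on the edges among the `vᵢ`, among the `tᵢ`
and on coincidences `vᵢ = tⱼ` always yields an induced cycle of length 4, 5 or 6, a legal
sequence of length four missing a vertex, or a total dominating set `a, b, c, d` inducing the
matching `ab, cd`. In the last case connectivity provides a vertex or an edge joining the two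
sides, and from it again a short induced cycle or a non-dominating legal sequence.
-/

open SimpleGraph

variable {V : Type*} {G : SimpleGraph V}

theorem isLegalSeq_singleton (a : V) : IsLegalSeq G [a] :=
  ⟨List.nodup_singleton a, fun i hi => by have : (i : ℕ) < 1 := i.isLt; omega⟩

theorem IsLegalSeq.concat {l : List V} {u w : V} (hl : IsLegalSeq G l) (hu : G.Adj u w)
    (hw : ∀ x ∈ l, ¬ G.Adj x w) : IsLegalSeq G (l ++ [u]) := by
  have get_left (j : Fin (l ++ [u]).length) (hj : (j : ℕ) < l.length) :
      (l ++ [u]).get j = l.get ⟨j, hj⟩ := List.getElem_append_left hj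
  refine ⟨List.nodup_append.2 ⟨hl.1, List.nodup_singleton u, ?_⟩, fun i hi => ?_⟩
  · intro x hx y hy hxy
    rw [List.mem_singleton] at hy
    exact hw x hx (hxy ▸ hy ▸ hu)
  · rcases (Nat.lt_succ_iff_lt_or_eq.1 (by simpa using i.isLt)) with hil | hil
    · obtain ⟨w', hw', hnew⟩ := hl.2 ⟨i, hil⟩ hi
      refine ⟨w', by rwa [get_left i hil], fun j hj => ?_⟩
      rw [get_left j (hj.trans hil)]
      exact hnew _ hj
    · refine ⟨w, by simpa [hil] using hu, fun j hj => ?_⟩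
      rw [get_left j (hil ▸ hj)]
      exact hw _ (List.get_mem _ _)

theorem IsLegalSeq.exists_isTotalDomSeq [Fintype V] (hiso : NoIsolatedVerts G) {l : List V}
    (hl : IsLegalSeq G l) : ∃ m, IsTotalDomSeq G m ∧ l.length ≤ m.length := by
  by_cases hdom : IsTotalDomSet G {v | v ∈ l}
  · exact ⟨l, ⟨hl, hdom⟩, le_rfl⟩
  obtain ⟨z, hz⟩ : ∃ z, ∀ x ∈ l, ¬ G.Adj z x := by simpa [IsTotalDomSet] using hdom
  obtain ⟨e, hze⟩ := hiso z
  have hl' := hl.concat hze.symm fun x hx h => hz x hx h.symm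
  have := hl'.1.length_le_card
  obtain ⟨m, hm, hlen⟩ := hl'.exists_isTotalDomSeq hiso
  exact ⟨m, hm, by simp only [List.length_append, List.length_singleton] at hlen; omega⟩
termination_by Fintype.card V - l.length
decreasing_by simp only [List.length_append, List.length_singleton] at this ⊢; omega

theorem IsLegalSeq.length_le_grundyTotalDomNum [Fintype V] (hiso : NoIsolatedVerts G)
    {l : List V} (hl : IsLegalSeq G l) : l.length ≤ grundyTotalDomNum G := by
  obtain ⟨m, hm, hlen⟩ := hl.exists_isTotalDomSeq hiso
  refine hlen.trans (le_csSup ⟨Fintype.card V, ?_⟩ ⟨m, hm, rfl⟩)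
  rintro _ ⟨m', hm', rfl⟩
  exact hm'.1.1.length_le_card

theorem exists_isTotalDomSeq_length_eq_grundyTotalDomNum [Fintype V]
    (h : grundyTotalDomNum G ≠ 0) :
    ∃ l, IsTotalDomSeq G l ∧ l.length = grundyTotalDomNum G := by
  refine Nat.sSup_mem (s := {k | ∃ l, IsTotalDomSeq G l ∧ l.length = k})
    (Set.nonempty_iff_ne_empty.2 fun he => h ?_) ⟨Fintype.card V, ?_⟩
  · rw [grundyTotalDomNum, he, csSup_empty, bot_eq_zero]
  · rintro _ ⟨m, hm, rfl⟩
    exact hm.1.1.length_le_card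

theorem totalDomNum_le_ncard {S : Set V} (hS : IsTotalDomSet G S) : totalDomNum G ≤ S.ncard :=
  Nat.sInf_le ⟨S, hS, rfl⟩

theorem noIsolatedVerts_of_totalDomNum_ne_zero (h : totalDomNum G ≠ 0) : NoIsolatedVerts G := by
  obtain ⟨_, S, hS, -⟩ := Nat.nonempty_of_pos_sInf (Nat.pos_of_ne_zero h)
  intro v
  obtain ⟨u, -, hu⟩ := hS v
  exact ⟨u, hu⟩

attribute [local grind →] SimpleGraph.Adj.symm
attribute [local grind .] SimpleGraph.irrefl

theorem Chordal.false_of_adj_iff_cycleGraph (hG : Chordal G) {n : ℕ} (hn : 4 ≤ n)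
    (f : Fin n → V) (hf : Function.Injective f)
    (hadj : ∀ i j, G.Adj (f i) (f j) ↔ (cycleGraph n).Adj i j) : False :=
  (hG n hn).false ⟨⟨f, hf⟩, hadj _ _⟩

theorem Chordal.no_induced_C4 (hG : Chordal G) (a b c d : V) (hac : a ≠ c) (hbd : b ≠ d)
    (hab : G.Adj a b) (hbc : G.Adj b c) (hcd : G.Adj c d) (hda : G.Adj d a)
    (hnac : ¬ G.Adj a c) (hnbd : ¬ G.Adj b d) : False := by
  refine hG.false_of_adj_iff_cycleGraph le_rfl ![a, b, c, d] ?_ ?_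
  · intro i j
    fin_cases i <;> fin_cases j <;>
      simp only [Matrix.cons_val, Fin.reduceFinMk, Fin.isValue] <;> grind
  · intro i j
    fin_cases i <;> fin_cases j <;>
      simp only [Matrix.cons_val, Fin.reduceFinMk, Fin.isValue, cycleGraph_adj, Fin.reduceSub] <;>
      grind

theorem Chordal.no_induced_C5 (hG : Chordal G) (a b c d e : V)
    (hab : G.Adj a b) (hbc : G.Adj b c) (hcd : G.Adj c d) (hde : G.Adj d e) (hea : G.Adj e a)
    (hnac : ¬ G.Adj a c) (hnad : ¬ G.Adj a d) (hnbd : ¬ G.Adj b d) (hnbe : ¬ G.Adj b e)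
    (hnce : ¬ G.Adj c e) : False := by
  refine hG.false_of_adj_iff_cycleGraph (by norm_num) ![a, b, c, d, e] ?_ ?_
  · intro i j
    fin_cases i <;> fin_cases j <;>
      simp only [Matrix.cons_val, Fin.reduceFinMk, Fin.isValue] <;> grind
  · intro i j
    fin_cases i <;> fin_cases j <;>
      simp only [Matrix.cons_val, Fin.reduceFinMk, Fin.isValue, cycleGraph_adj, Fin.reduceSub] <;>
      grind

theorem Chordal.no_induced_C6 (hG : Chordal G) (a b c d e f : V)
    (hab : G.Adj a b) (hbc : G.Adj b c) (hcd : G.Adj c d) (hde : G.Adj d e) (hef : G.Adj e f)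
    (hfa : G.Adj f a) (hnac : ¬ G.Adj a c) (hnad : ¬ G.Adj a d) (hnae : ¬ G.Adj a e)
    (hnbd : ¬ G.Adj b d) (hnbe : ¬ G.Adj b e) (hnbf : ¬ G.Adj b f) (hnce : ¬ G.Adj c e)
    (hncf : ¬ G.Adj c f) (hndf : ¬ G.Adj d f) : False := by
  refine hG.false_of_adj_iff_cycleGraph (by norm_num) ![a, b, c, d, e, f] ?_ ?_
  · intro i j
    fin_cases i <;> fin_cases j <;>
      simp only [Matrix.cons_val, Fin.reduceFinMk, Fin.isValue] <;> grind
  · intro i j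
    fin_cases i <;> fin_cases j <;>
      simp only [Matrix.cons_val, Fin.reduceFinMk, Fin.isValue, cycleGraph_adj, Fin.reduceSub] <;>
      grind

structure Counterexample (G : SimpleGraph V) : Prop where
  connected : G.Connected
  chordal : Chordal G
  noIsolatedVerts : NoIsolatedVerts G
  four_le_ncard : ∀ S : Set V, IsTotalDomSet G S → 4 ≤ S.ncard
  length_le_four : ∀ l : List V, IsLegalSeq G l → l.length ≤ 4

namespace Counterexample

theorem exists_forall_not_adj (hG : Counterexample G) {S : Set V} (hS : S.ncard ≤ 3) :
    ∃ z, ∀ x ∈ S, ¬ G.Adj z x := by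
  by_contra! h
  have := hG.four_le_ncard S h
  omega

theorem exists_not_adj (hG : Counterexample G) (a b c : V) :
    ∃ z, ¬ G.Adj z a ∧ ¬ G.Adj z b ∧ ¬ G.Adj z c := by
  have h3 := Set.ncard_insert_le a {b, c}
  have h2 := Set.ncard_insert_le b {c}
  rw [Set.ncard_singleton] at h2
  obtain ⟨z, hz⟩ := hG.exists_forall_not_adj (S := {a, b, c}) (by omega)
  exact ⟨z, hz a (by simp), hz b (by simp), hz c (by simp)⟩

theorem false_of_legal_four_missing (hG : Counterexample G) (a b c d w₂ w₃ w₄ u : V)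
    (h₂ : G.Adj b w₂) (h₂a : ¬ G.Adj a w₂)
    (h₃ : G.Adj c w₃) (h₃a : ¬ G.Adj a w₃) (h₃b : ¬ G.Adj b w₃)
    (h₄ : G.Adj d w₄) (h₄a : ¬ G.Adj a w₄) (h₄b : ¬ G.Adj b w₄) (h₄c : ¬ G.Adj c w₄)
    (hua : ¬ G.Adj u a) (hub : ¬ G.Adj u b) (huc : ¬ G.Adj u c) (hud : ¬ G.Adj u d) :
    False := by
  obtain ⟨e, hue⟩ := hG.noIsolatedVerts u
  have hl : IsLegalSeq G [a, b, c, d, e] :=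
    ((((isLegalSeq_singleton a).concat h₂ (by grind)).concat h₃ (by grind)).concat h₄
      (by grind)).concat hue.symm (by grind)
  simpa using hG.length_le_four _ hl

theorem false_of_induced_matching_of_common_neighbor (hG : Counterexample G) (a b c d x : V)
    (hab : G.Adj a b) (hcd : G.Adj c d) (hac : ¬ G.Adj a c) (had : ¬ G.Adj a d)
    (hbc : ¬ G.Adj b c) (hbd : ¬ G.Adj b d)
    (hD : ∀ z, G.Adj z a ∨ G.Adj z b ∨ G.Adj z c ∨ G.Adj z d)
    (hxb : G.Adj x b) (hxc : G.Adj x c) : False := by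
  obtain ⟨q, hqb, hqx, hqc⟩ := hG.exists_not_adj b x c
  wlog hqa : G.Adj q a generalizing a b c d
  · apply this d c b a <;> grind
  by_cases hqd : G.Adj q d
  · by_cases hxa : G.Adj x a <;> by_cases hxd : G.Adj x d
    · apply hG.chordal.no_induced_C4 a x d q <;> grind
    · apply hG.chordal.no_induced_C5 a x c d q <;> grind
    · apply hG.chordal.no_induced_C5 d x b a q <;> grind
    · apply hG.chordal.no_induced_C6 a b x c d q <;> grind
  · obtain ⟨z, hzq, hza, hzb⟩ := hG.exists_not_adj q a b
    rcases hD z with hz | hz | hz | hz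
    · exact hza hz
    · exact hzb hz
    · apply hG.false_of_legal_four_missing q b a c x b z c <;> grind
    · apply hG.false_of_legal_four_missing q b a d x b z d <;> grind

theorem false_of_induced_matching_of_bridge (hG : Counterexample G) (a b c d x y : V)
    (hab : G.Adj a b) (hcd : G.Adj c d) (had : ¬ G.Adj a d) (hbc : ¬ G.Adj b c)
    (hbd : ¬ G.Adj b d) (hside : ∀ z, G.Adj z d → ¬ G.Adj z a ∧ ¬ G.Adj z b)
    (hxy : G.Adj x y) (hxb : G.Adj x b) (hxc : ¬ G.Adj x c) (hxd : ¬ G.Adj x d)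
    (hya : ¬ G.Adj y a) (hyb : ¬ G.Adj y b) : False := by
  obtain ⟨z, hzx, hzy, hzc⟩ := hG.exists_not_adj x y c
  by_cases hzd : G.Adj z d
  · have := hside z hzd
    apply hG.false_of_legal_four_missing z d y b c x a b <;> grind
  · apply hG.false_of_legal_four_missing z b x c x y d c <;> grind

theorem false_of_induced_matching (hG : Counterexample G) (a b c d : V)
    (hab : G.Adj a b) (hcd : G.Adj c d) (hac : ¬ G.Adj a c) (had : ¬ G.Adj a d)
    (hbc : ¬ G.Adj b c) (hbd : ¬ G.Adj b d)
    (hD : ∀ z, G.Adj z a ∨ G.Adj z b ∨ G.Adj z c ∨ G.Adj z d) : False := by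
  by_cases hcommon : ∃ x, (G.Adj x a ∨ G.Adj x b) ∧ (G.Adj x c ∨ G.Adj x d)
  · obtain ⟨x, hxa | hxb, hxc | hxd⟩ := hcommon
    · apply hG.false_of_induced_matching_of_common_neighbor b a c d x <;> grind
    · apply hG.false_of_induced_matching_of_common_neighbor b a d c x <;> grind
    · apply hG.false_of_induced_matching_of_common_neighbor a b c d x <;> grind
    · apply hG.false_of_induced_matching_of_common_neighbor a b d c x <;> grind
  obtain ⟨p⟩ := hG.connected.preconnected a c
  obtain ⟨⟨⟨x, y⟩, hxy⟩, -, hx, hy⟩ :=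
    p.exists_boundary_dart {z | G.Adj z a ∨ G.Adj z b} (Or.inr hab)
      fun h => hcommon ⟨c, h, Or.inr hcd⟩
  simp only [Set.mem_ofPred_eq, not_or] at hx hy
  rcases hx with hxa | hxb
  · apply hG.false_of_induced_matching_of_bridge b a c d x y <;> grind
  · apply hG.false_of_induced_matching_of_bridge a b c d x y <;> grind

end Counterexample

theorem Fin.exists_perm_apply_zero_apply_one :
    ∀ i j : Fin 4, i ≠ j → ∃ σ : Equiv.Perm (Fin 4), σ 0 = i ∧ σ 1 = j := by
  decide

structure MutuallyPrivate (G : SimpleGraph V) (v t : Fin 4 → V) : Prop where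
  adj : ∀ i, G.Adj (v i) (t i)
  not_adj : ∀ i j, i ≠ j → ¬ G.Adj (v i) (t j)
  dom_left : ∀ z, ∃ i, G.Adj z (v i)
  dom_right : ∀ z, ∃ i, G.Adj z (t i)

namespace MutuallyPrivate

variable {v t : Fin 4 → V}

theorem comp_perm (h : MutuallyPrivate G v t) (σ : Equiv.Perm (Fin 4)) :
    MutuallyPrivate G (v ∘ σ) (t ∘ σ) where
  adj i := h.adj (σ i)
  not_adj i j hij := h.not_adj (σ i) (σ j) (σ.injective.ne hij)
  dom_left z := (h.dom_left z).imp' σ.symm fun i hi => by simpa using hi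
  dom_right z := (h.dom_right z).imp' σ.symm fun i hi => by simpa using hi

theorem symm (h : MutuallyPrivate G v t) : MutuallyPrivate G t v where
  adj i := (h.adj i).symm
  not_adj i j hij hadj := h.not_adj j i hij.symm hadj.symm
  dom_left := h.dom_right
  dom_right := h.dom_left

theorem adj_left_or (h : MutuallyPrivate G v t) (z : V) :
    G.Adj z (v 0) ∨ G.Adj z (v 1) ∨ G.Adj z (v 2) ∨ G.Adj z (v 3) := by
  obtain ⟨i, hi⟩ := h.dom_left z
  fin_cases i <;> simp_all

theorem false_of_path (hG : Counterexample G) (h : MutuallyPrivate G v t)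
    (hdisj : ∀ i j, ¬ (G.Adj (v i) (v j) ∧ G.Adj (t i) (t j))) (i j k : Fin 4) (hik : i ≠ k)
    (hij : G.Adj (v i) (v j)) (hjk : G.Adj (v j) (v k)) : False := by
  have := h.adj
  have := h.not_adj
  by_cases hik' : G.Adj (t i) (t k)
  · apply hG.chordal.no_induced_C5 (v i) (v j) (v k) (t k) (t i) <;> grind
  obtain ⟨m, hkm⟩ := h.dom_right (t k)
  obtain ⟨m', him'⟩ := h.dom_right (t i)
  -- `t k` and `t i` both have their neighbour in `range t` at the index outside `{i, j, k}`
  obtain rfl : m = m' := by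
    have : i ≠ j := fun e => G.irrefl (e ▸ hij)
    have : j ≠ k := fun e => G.irrefl (e ▸ hjk)
    grind
  by_cases hvik : G.Adj (v i) (v k)
  · apply hG.chordal.no_induced_C5 (v i) (t i) (t m) (t k) (v k) <;> grind
  · apply hG.chordal.no_induced_C6 (v i) (v j) (v k) (t k) (t m) (t i) <;> grind

theorem false_of_edge_disjoint (hG : Counterexample G) (h : MutuallyPrivate G v t)
    (hdisj : ∀ i j, ¬ (G.Adj (v i) (v j) ∧ G.Adj (t i) (t j))) : False := by
  have hpath := h.false_of_path hG hdisj
  have hD := h.adj_left_or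
  obtain ⟨j, h0j⟩ := h.dom_left (v 0)
  fin_cases j
  · exact G.irrefl h0j
  · apply hG.false_of_induced_matching (v 0) (v 1) (v 2) (v 3) <;> grind
  · apply hG.false_of_induced_matching (v 0) (v 2) (v 1) (v 3) <;> grind
  · apply hG.false_of_induced_matching (v 0) (v 3) (v 1) (v 2) <;> grind

theorem false_of_left_eq_right (hG : Counterexample G) (h : MutuallyPrivate G v t)
    (hid : v 0 = t 1) : False := by
  -- `v 0` is a leaf of `G[range v]` at `v 1`, and `t 1` a leaf of `G[range t]` at `t 0`
  have := h.adj
  have := h.not_adj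
  have hv := h.adj_left_or
  have ht := h.symm.adj_left_or
  by_cases hv23 : G.Adj (v 2) (v 3) <;> by_cases ht23 : G.Adj (t 2) (t 3)
  · by_cases hid₂ : v 2 = t 3
    · by_cases hv13 : G.Adj (v 1) (v 3)
      · by_cases ht02 : G.Adj (t 0) (t 2)
        · apply hG.chordal.no_induced_C6 (v 1) (v 3) (v 2) (t 2) (t 0) (v 0) <;> grind
        · apply hG.false_of_induced_matching (t 0) (t 1) (t 2) (t 3) <;> grind
      · apply hG.false_of_induced_matching (v 0) (v 1) (v 2) (v 3) <;> grind
    by_cases hid₃ : v 3 = t 2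
    · by_cases hv12 : G.Adj (v 1) (v 2)
      · by_cases ht03 : G.Adj (t 0) (t 3)
        · apply hG.chordal.no_induced_C6 (v 0) (v 1) (v 2) (v 3) (t 3) (t 0) <;> grind
        · apply hG.false_of_induced_matching (t 0) (t 1) (t 2) (t 3) <;> grind
      · apply hG.false_of_induced_matching (v 0) (v 1) (v 2) (v 3) <;> grind
    apply hG.chordal.no_induced_C4 (v 2) (v 3) (t 3) (t 2) <;> grind
  · apply hG.chordal.no_induced_C5 (v 2) (t 2) (t 0) (t 3) (v 3) <;> grind
  · apply hG.chordal.no_induced_C5 (v 2) (v 1) (v 3) (t 3) (t 2) <;> grind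
  · apply hG.chordal.no_induced_C6 (v 2) (v 1) (v 3) (t 3) (t 0) (t 2) <;> grind

end MutuallyPrivate

namespace Counterexample

theorem exists_private_neighbor (hG : Counterexample G) (v : Fin 4 → V)
    (hv : ∀ z, ∃ i, G.Adj z (v i)) (i : Fin 4) :
    ∃ t, G.Adj (v i) t ∧ ∀ j, j ≠ i → ¬ G.Adj (v j) t := by
  obtain ⟨z, hz⟩ := hG.exists_forall_not_adj (S := v '' {i}ᶜ)
    ((Set.ncard_image_le (Set.toFinite _)).trans (by rw [Set.ncard_compl]; simp))
  obtain ⟨k, hk⟩ := hv z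
  obtain rfl : k = i := by_contra fun hki => hz _ ⟨k, hki, rfl⟩ hk
  exact ⟨z, hk.symm, fun j hj hjz => hz _ ⟨j, hj, rfl⟩ hjz.symm⟩

theorem exists_mutuallyPrivate (hG : Counterexample G) (v : Fin 4 → V)
    (hv : ∀ z, ∃ i, G.Adj z (v i)) : ∃ t, MutuallyPrivate G v t := by
  choose t hvt hnot using hG.exists_private_neighbor v hv
  refine ⟨t, hvt, fun i j hij => hnot j i hij, hv, fun z => ?_⟩
  by_contra! hz
  apply hG.false_of_legal_four_missing (t 0) (t 1) (t 2) (t 3) (v 1) (v 2) (v 3) z <;> grind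

theorem not_mutuallyPrivate (hG : Counterexample G) {v t : Fin 4 → V} :
    ¬ MutuallyPrivate G v t := by
  intro h
  by_cases hcommon : ∃ i j, G.Adj (v i) (v j) ∧ G.Adj (t i) (t j)
  · obtain ⟨i, j, hv, ht⟩ := hcommon
    obtain ⟨σ, rfl, rfl⟩ := Fin.exists_perm_apply_zero_apply_one i j (fun e => G.irrefl (e ▸ hv))
    -- `v i v j t j t i` is an induced `C₄` unless two opposite vertices coincide
    by_cases hid : v (σ 0) = t (σ 1)
    · exact (h.comp_perm σ).false_of_left_eq_right hG hid
    by_cases hid' : t (σ 0) = v (σ 1)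
    · exact (h.comp_perm σ).symm.false_of_left_eq_right hG hid'
    have := h.adj
    have := h.not_adj
    apply hG.chordal.no_induced_C4 (v (σ 0)) (v (σ 1)) (t (σ 1)) (t (σ 0)) <;> grind
  · exact h.false_of_edge_disjoint hG fun i j hij => hcommon ⟨i, j, hij⟩

end Counterexample

/-- There is no connected chordal graph `G` with
`γ_t(G) = 4` and `γ_gr^t(G) = 4`. -/
theorem no_connected_chordal_with_total_dom_eq_grundy_eq_four :
    ¬ ∃ (V : Type) (_ : Fintype V) (G : SimpleGraph V),
        G.Connected ∧ Chordal G ∧ totalDomNum G = 4 ∧ grundyTotalDomNum G = 4 := by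
  rintro ⟨V, _, G, hconn, hchordal, htd, hgr⟩
  have hiso := noIsolatedVerts_of_totalDomNum_ne_zero (G := G) (by omega)
  have hG : Counterexample G :=
    { connected := hconn
      chordal := hchordal
      noIsolatedVerts := hiso
      four_le_ncard := fun S hS => htd ▸ totalDomNum_le_ncard hS
      length_le_four := fun l hl => hgr ▸ hl.length_le_grundyTotalDomNum hiso }
  obtain ⟨l, hl, hlen⟩ := exists_isTotalDomSeq_length_eq_grundyTotalDomNum (G := G) (by omega)
  have hdom (z : V) : ∃ i : Fin 4, G.Adj z (l.get (i.cast (hlen.trans hgr).symm)) := by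
    obtain ⟨u, hu, hzu⟩ := hl.2 z
    obtain ⟨k, rfl⟩ := List.get_of_mem hu
    exact ⟨k.cast (hlen.trans hgr), hzu⟩
  obtain ⟨t, ht⟩ := hG.exists_mutuallyPrivate _ hdom
  exact hG.not_mutuallyPrivate ht
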